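/- arXiv:2409.15053 — 2 statements merged into one kernel-verified Lean document; each statement's English description precedes it below -/
import Mathlib

section
/- Let −1 ≤ α ≤ β ≤ 1, let φ be the indicator function of [α,β], and define b_0 = (arccos α − arccos β)/π and b_i = 2(sin(i·arccos α) − sin(i·arccos β))/(iπ) for i ≥ 1. Let p_m(z) = Σ_{i=0}^{m} b_i T_i(z) be the truncated Chebyshev series. Then p_m converges to φ in L²(μ): ∫_{(−1,1)} (p_m(z) − φ(z))² (1−z²)^{−1/2} dz → 0 as m → ∞. -/
open MeasureTheory Real Polynomial Polynomial.Chebyshev Filter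

/-!
Substituting `z = cos θ` turns the weighted `L²` error into half the `L²` error on `[-π, π]`
between the cosine polynomial `∑ bᵢ cos (i θ)` and the even function `θ ↦ φ (cos θ)`.
The `bᵢ` are the cosine coefficients of that function, so the cosine polynomial is its symmetric
Fourier partial sum, and these partial sums converge in `L²` because the exponentials form a
Hilbert basis of `L²(ℝ / 2πℤ)`.
-/

theorem integral_neg_self_eq_integral_add_comp_neg {E : Type*} [NormedAddCommGroup E]
    [NormedSpace ℝ E] {f : ℝ → E} {a : ℝ} (hf : IntervalIntegrable f volume (-a) a) :
    ∫ x in -a..a, f x = ∫ x in 0..a, (f x + f (-x)) := by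
  have h0 : (0 : ℝ) ∈ Set.uIcc (-a) a := by
    rcases le_total 0 a with ha | ha <;> simp [ha]
  have hl : IntervalIntegrable f volume (-a) 0 := hf.mono_set (Set.uIcc_subset_uIcc_left h0)
  have hr : IntervalIntegrable f volume 0 a := hf.mono_set (Set.uIcc_subset_uIcc_right h0)
  have hl' : IntervalIntegrable (fun x => f (-x)) volume 0 a := by
    simpa using ((IntervalIntegrable.iff_comp_neg (by finiteness)).mp hl).symm
  rw [← intervalIntegral.integral_add_adjacent_intervals hl hr,
    intervalIntegral.integral_add hr hl', intervalIntegral.integral_comp_neg, neg_zero, add_comm]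

theorem Function.Even.integral_neg_self_eq_two_smul {E : Type*} [NormedAddCommGroup E]
    [NormedSpace ℝ E] {f : ℝ → E} (hf : f.Even) (a : ℝ) :
    ∫ x in -a..a, f x = (2 : ℝ) • ∫ x in 0..a, f x := by
  by_cases hi : IntervalIntegrable f volume (-a) a
  · simp_rw [integral_neg_self_eq_integral_add_comp_neg hi, hf _, ← two_smul ℝ (f _),
      intervalIntegral.integral_smul]
  · have hi' : ¬IntervalIntegrable f volume 0 a := fun h => hi <| by
      refine IntervalIntegrable.trans (b := 0) ?_ h
      simpa [funext hf] using (IntervalIntegrable.iff_comp_neg (by finiteness)).mp h.symm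
    rw [intervalIntegral.integral_undef hi, intervalIntegral.integral_undef hi', smul_zero]

theorem intervalIntegral_indicator_Icc {E : Type*} [NormedAddCommGroup E] [NormedSpace ℝ E]
    {a b c d : ℝ} (hac : a ≤ c) (hcd : c ≤ d) (hdb : d ≤ b) (f : ℝ → E) :
    ∫ x in a..b, (Set.Icc c d).indicator f x = ∫ x in c..d, f x := by
  rw [intervalIntegral.integral_of_le (hac.trans (hcd.trans hdb)),
    intervalIntegral.integral_of_le hcd, setIntegral_indicator measurableSet_Icc]
  have hsub : Set.Ioc c d ⊆ Set.Ioc a b ∩ Set.Icc c d := fun x hx =>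
    ⟨⟨hac.trans_lt hx.1, hx.2.trans hdb⟩, Set.Ioc_subset_Icc_self hx⟩
  exact setIntegral_congr_set <|
    (Set.inter_subset_right.eventuallyLE.trans Ioc_ae_eq_Icc.symm.le).antisymm hsub.eventuallyLE

theorem integral_cos_mul_left {c : ℝ} (hc : c ≠ 0) (a b : ℝ) :
    ∫ x in a..b, cos (c * x) = (sin (c * b) - sin (c * a)) / c := by
  rw [intervalIntegral.integral_comp_mul_left (fun x => cos x) hc, integral_cos, smul_eq_mul,
    inv_mul_eq_div]

theorem integral_Ioo_mul_inv_sqrt_one_sub_sq (q : ℝ → ℝ) :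
    ∫ z in Set.Ioo (-1 : ℝ) 1, q z * (√(1 - z ^ 2))⁻¹ = ∫ θ in 0..π, q (cos θ) := by
  rw [← integral_measureT_eq_integral_cos, integral_measureT,
    intervalIntegral.integral_of_le (by norm_num), integral_Ioc_eq_integral_Ioo]
  simp_rw [Real.sqrt_inv]

theorem integral_sum_T_sub_sq_mul_inv_sqrt (s : Finset ℕ) (b : ℕ → ℝ) (φ : ℝ → ℝ) :
    ∫ z in Set.Ioo (-1 : ℝ) 1,
        ((∑ i ∈ s, b i * (T ℝ i).eval z) - φ z) ^ 2 * (√(1 - z ^ 2))⁻¹ =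
      2⁻¹ * ∫ θ in -π..π, ((∑ i ∈ s, b i * cos (i * θ)) - φ (cos θ)) ^ 2 := by
  rw [integral_Ioo_mul_inv_sqrt_one_sub_sq,
    Function.Even.integral_neg_self_eq_two_smul (fun θ => by simp only [mul_neg, cos_neg]),
    smul_eq_mul, inv_mul_cancel_left₀ two_ne_zero]
  simp only [T_real_cos, Int.cast_natCast]

instance : Fact (0 < 2 * π) := ⟨two_pi_pos⟩

theorem fourier_coe_add_fourier_neg_coe (n : ℤ) (x : ℝ) :
    fourier n (x : AddCircle (2 * π)) + fourier (-n) (x : AddCircle (2 * π)) =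
      ((2 * cos (n * x) : ℝ) : ℂ) := by
  have harg : 2 * π * Complex.I * n * x / ((2 * π : ℝ) : ℂ) = ((n * x : ℝ) : ℂ) * Complex.I := by
    push_cast; field_simp
  rw [fourier_neg, Complex.add_conj, fourier_coe_apply, harg, Complex.exp_ofReal_mul_I_re]

theorem fourier_neg_coe_neg {T : ℝ} (n : ℤ) (x : ℝ) :
    fourier (-n) ((-x : ℝ) : AddCircle T) = fourier n (x : AddCircle T) := by
  simp only [fourier_coe_apply]
  congr 1
  push_cast
  ring

theorem sum_Icc_smul_fourier_of_even {c : ℤ → ℝ} (hc : c.Even) {a : ℕ → ℝ} (ha₀ : a 0 = c 0)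
    (ha : ∀ i : ℕ, a (i + 1) = 2 * c ↑(i + 1)) (m : ℕ) (x : ℝ) :
    ∑ n ∈ Finset.Icc (-(m : ℤ)) m, (c n : ℂ) • fourier n (x : AddCircle (2 * π)) =
      ((∑ i ∈ Finset.range (m + 1), a i * cos (i * x) : ℝ) : ℂ) := by
  set f : ℤ → ℂ := fun n => (c n : ℂ) • fourier n (x : AddCircle (2 * π))
  have hreflect : ∑ n ∈ Finset.Icc (-(m : ℤ)) m, f (-n) = ∑ n ∈ Finset.Icc (-(m : ℤ)) m, f n :=
    Finset.sum_nbij' Neg.neg Neg.neg (by simp only [Finset.mem_Icc, neg_le_neg_iff, and_imp]; omega)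
      (by simp only [Finset.mem_Icc, neg_le_neg_iff, and_imp]; omega) (by simp) (by simp)
      (fun _ _ => rfl)
  have hpair : ∀ n, f n + f (-n) = ((2 * (c n * cos (n * x)) : ℝ) : ℂ) := fun n => by
    simp only [f, hc n, smul_eq_mul, ← mul_add, fourier_coe_add_fourier_neg_coe]
    push_cast; ring
  have hcos : (fun n : ℤ => c n * cos (n * x)).Even := fun n => by
    simp only [hc n, Int.cast_neg, neg_mul, cos_neg]
  calc ∑ n ∈ Finset.Icc (-(m : ℤ)) m, f n
      = (∑ n ∈ Finset.Icc (-(m : ℤ)) m, (f n + f (-n))) / 2 := by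
        rw [Finset.sum_add_distrib, hreflect]; ring
    _ = ((∑ n ∈ Finset.Icc (-(m : ℤ)) m, c n * cos (n * x) : ℝ) : ℂ) := by
        simp only [hpair]; push_cast; rw [← Finset.mul_sum]; ring
    _ = _ := by
        congr 1
        rw [Finset.sum_Icc_of_even_eq_range hcos, Finset.sum_range_succ',
          Finset.sum_range_succ', ha₀, nsmul_eq_mul, mul_add, Finset.mul_sum]
        simp only [ha, Int.cast_natCast, Nat.cast_zero, Int.cast_zero, Nat.cast_ofNat, mul_assoc]
        ring

theorem fourierCoeff_liftIoc_eq_intervalIntegral {T : ℝ} [hT : Fact (0 < T)] (a : ℝ)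
    (f : ℝ → ℂ) (n : ℤ) :
    fourierCoeff (AddCircle.liftIoc T a f) n =
      (1 / T) • ∫ x in a..a + T, fourier (-n) (x : AddCircle T) • f x := by
  rw [fourierCoeff_eq_intervalIntegral _ _ a]
  congr 1
  refine intervalIntegral.integral_congr_ae (ae_of_all _ fun x hx => ?_)
  rw [Set.uIoc_of_le (by linarith [hT.out])] at hx
  rw [AddCircle.liftIoc_coe_apply hx]

theorem fourierCoeff_liftIoc_of_even {g : ℝ → ℝ} (hg : g.Even)
    (hint : IntervalIntegrable g volume (-π) π) (n : ℤ) :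
    fourierCoeff (AddCircle.liftIoc (2 * π) (-π) fun x => (g x : ℂ)) n =
      ((π⁻¹ * ∫ x in 0..π, cos (n * x) * g x : ℝ) : ℂ) := by
  have hint' : IntervalIntegrable
      (fun x => fourier (-n) (x : AddCircle (2 * π)) • (g x : ℂ)) volume (-π) π :=
    IntervalIntegrable.continuousOn_mul ⟨hint.1.ofReal, hint.2.ofReal⟩
      ((map_continuous (fourier (-n))).comp (AddCircle.continuous_mk' _)).continuousOn
  have hpair : ∀ x : ℝ, fourier (-n) (x : AddCircle (2 * π)) • (g x : ℂ) +
      fourier (-n) ((-x : ℝ) : AddCircle (2 * π)) • (g (-x) : ℂ) =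
        ((2 * (cos (n * x) * g x) : ℝ) : ℂ) := fun x => by
    rw [hg, fourier_neg_coe_neg, smul_eq_mul, smul_eq_mul, ← add_mul, add_comm,
      fourier_coe_add_fourier_neg_coe]
    push_cast; ring
  rw [fourierCoeff_liftIoc_eq_intervalIntegral, show -π + 2 * π = π by ring,
    integral_neg_self_eq_integral_add_comp_neg hint']
  simp_rw [hpair, intervalIntegral.integral_ofReal, intervalIntegral.integral_const_mul]
  rw [Complex.real_smul]
  push_cast
  field_simp

section L2Convergence

theorem MeasureTheory.L2.integral_norm_sq_eq_norm_sq {α 𝕜 E : Type*} [MeasurableSpace α]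
    {μ : Measure α} [RCLike 𝕜] [NormedAddCommGroup E] [InnerProductSpace 𝕜 E] (u : Lp E 2 μ) :
    ∫ x, ‖u x‖ ^ 2 ∂μ = ‖u‖ ^ 2 := by
  have h := congr_arg RCLike.re (L2.inner_def (𝕜 := 𝕜) u u)
  rw [← integral_re (L2.integrable_inner u u)] at h
  simpa only [← norm_sq_eq_re_inner] using h.symm

variable {T : ℝ} [hT : Fact (0 < T)]

noncomputable def fourierPartialSum (f : AddCircle T → ℂ) (m : ℕ) (x : AddCircle T) : ℂ :=
  ∑ n ∈ Finset.Icc (-(m : ℤ)) m, fourierCoeff f n • fourier n x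

theorem tendsto_integral_norm_fourierPartialSum_sub_sq {f : AddCircle T → ℂ}
    (hf : MemLp f 2 AddCircle.haarAddCircle) :
    Tendsto (fun m => ∫ x, ‖fourierPartialSum f m x - f x‖ ^ 2 ∂AddCircle.haarAddCircle)
      atTop (nhds 0) := by
  set F := hf.toLp f
  set P : ℕ → Lp ℂ 2 (@AddCircle.haarAddCircle T _) := fun m =>
    ∑ n ∈ Finset.Icc (-(m : ℤ)) m, fourierCoeff f n • fourierLp 2 n
  have hP : Tendsto P atTop (nhds F) := by
    have := (hasSum_fourier_series_L2 F).comp Finset.tendsto_Icc_neg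
    rwa [fourierCoeff_congr_ae hf.coeFn_toLp] at this
  have hP_coe : ∀ m, P m =ᵐ[AddCircle.haarAddCircle] fourierPartialSum f m := fun m => by
    have hP_toLp : P m = ContinuousMap.toLp 2 AddCircle.haarAddCircle ℂ
        (∑ n ∈ Finset.Icc (-(m : ℤ)) m, fourierCoeff f n • fourier n) := by
      simp [P, map_sum, map_smul]
    rw [hP_toLp]
    filter_upwards [ContinuousMap.coeFn_toLp (p := 2) (𝕜 := ℂ) AddCircle.haarAddCircle
      (∑ n ∈ Finset.Icc (-(m : ℤ)) m, fourierCoeff f n • fourier n)] with x hx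
    rw [hx, fourierPartialSum]
    simp only [ContinuousMap.coe_sum, ContinuousMap.coe_smul, Finset.sum_apply, Pi.smul_apply]
  have hnorm : ∀ m, ∫ x, ‖fourierPartialSum f m x - f x‖ ^ 2 ∂AddCircle.haarAddCircle =
      ‖P m - F‖ ^ 2 := fun m => by
    rw [← L2.integral_norm_sq_eq_norm_sq (𝕜 := ℂ)]
    refine integral_congr_ae ?_
    filter_upwards [Lp.coeFn_sub (P m) F, hP_coe m, hf.coeFn_toLp] with x h1 h2 h3
    rw [h1, Pi.sub_apply, h2, h3]
  simp_rw [hnorm]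
  simpa using (tendsto_iff_norm_sub_tendsto_zero.1 hP).pow 2

theorem tendsto_intervalIntegral_norm_fourierPartialSum_liftIoc_sub_sq {a : ℝ} {f : ℝ → ℂ}
    (hf : MemLp f 2 (volume.restrict (Set.Ioc a (a + T)))) :
    Tendsto (fun m => ∫ x in a..a + T,
      ‖fourierPartialSum (AddCircle.liftIoc T a f) m x - f x‖ ^ 2) atTop (nhds 0) := by
  have h := (tendsto_integral_norm_fourierPartialSum_sub_sq
    hf.memLp_liftIoc.haarAddCircle).const_mul T
  rw [mul_zero] at h
  refine h.congr fun m => ?_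
  rw [AddCircle.integral_haarAddCircle, smul_eq_mul, mul_inv_cancel_left₀ hT.out.ne',
    ← AddCircle.intervalIntegral_preimage T a]
  refine intervalIntegral.integral_congr_ae (ae_of_all _ fun x hx => ?_)
  rw [Set.uIoc_of_le (by linarith [hT.out])] at hx
  rw [AddCircle.liftIoc_coe_apply hx]

end L2Convergence

section IdealFilter

noncomputable def idealFilter (α β : ℝ) : ℝ → ℝ :=
  Set.indicator (Set.Icc α β) fun _ => 1

variable {α β : ℝ}

theorem measurable_idealFilter : Measurable (idealFilter α β) :=
  measurable_const.indicator measurableSet_Icc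

theorem norm_idealFilter_le_one (z : ℝ) : ‖idealFilter α β z‖ ≤ 1 := by
  simp only [idealFilter, Set.indicator_apply]
  split_ifs <;> simp

theorem cos_mem_Icc_iff {θ : ℝ} (hα : α ∈ Set.Icc (-1) 1) (hβ : β ∈ Set.Icc (-1) 1)
    (hθ : θ ∈ Set.Icc 0 π) :
    cos θ ∈ Set.Icc α β ↔ θ ∈ Set.Icc (arccos β) (arccos α) := by
  have hcos : cos θ ∈ Set.Icc (-1) 1 := ⟨neg_one_le_cos θ, cos_le_one θ⟩
  rw [Set.mem_Icc, Set.mem_Icc, ← strictAntiOn_arccos.le_iff_ge hcos hα,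
    ← strictAntiOn_arccos.le_iff_ge hβ hcos, arccos_cos hθ.1 hθ.2, and_comm]

theorem integral_cos_mul_idealFilter_cos (h1 : -1 ≤ α) (h2 : α ≤ β) (h3 : β ≤ 1) (n : ℝ) :
    ∫ θ in 0..π, cos (n * θ) * idealFilter α β (cos θ) =
      ∫ θ in arccos β..arccos α, cos (n * θ) := by
  rw [← intervalIntegral_indicator_Icc (arccos_nonneg β) (arccos_le_arccos h2)
    (arccos_le_pi α)]
  refine intervalIntegral.integral_congr fun θ hθ => ?_
  rw [Set.uIcc_of_le pi_pos.le] at hθ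
  simp only [idealFilter, Set.indicator_apply,
    cos_mem_Icc_iff ⟨h1, h2.trans h3⟩ ⟨h1.trans h2, h3⟩ hθ]
  split_ifs <;> simp

theorem fourierCoeff_idealFilter_cos (h1 : -1 ≤ α) (h2 : α ≤ β) (h3 : β ≤ 1) (n : ℤ) :
    fourierCoeff (AddCircle.liftIoc (2 * π) (-π) fun θ => (idealFilter α β (cos θ) : ℂ)) n =
      ((π⁻¹ * ∫ θ in arccos β..arccos α, cos (n * θ) : ℝ) : ℂ) := by
  rw [fourierCoeff_liftIoc_of_even (g := fun θ => idealFilter α β (cos θ))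
      (fun θ => by simp only [cos_neg]) (intervalIntegrable_const.mono_fun'
      (measurable_idealFilter.comp measurable_cos).aestronglyMeasurable
      (ae_of_all _ fun θ => norm_idealFilter_le_one (cos θ))),
    integral_cos_mul_idealFilter_cos h1 h2 h3]

theorem fourierPartialSum_idealFilter_cos (h1 : -1 ≤ α) (h2 : α ≤ β) (h3 : β ≤ 1) {b : ℕ → ℝ}
    (hb0 : b 0 = (arccos α - arccos β) / π)
    (hbi : ∀ i : ℕ, 1 ≤ i → b i = 2 * (sin (i * arccos α) - sin (i * arccos β)) / (i * π))
    (m : ℕ) (θ : ℝ) :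
    fourierPartialSum (AddCircle.liftIoc (2 * π) (-π) fun θ => (idealFilter α β (cos θ) : ℂ))
        m θ = ((∑ i ∈ Finset.range (m + 1), b i * cos (i * θ) : ℝ) : ℂ) := by
  simp only [fourierPartialSum, fourierCoeff_idealFilter_cos h1 h2 h3]
  refine sum_Icc_smul_fourier_of_even (fun n => by simp) ?_ (fun i => ?_) m θ
  · simp only [hb0, Int.cast_zero, zero_mul, cos_zero, intervalIntegral.integral_const,
      smul_eq_mul, mul_one]
    ring
  · rw [hbi (i + 1) (by omega)]
    simp only [Int.cast_natCast, integral_cos_mul_left (Nat.cast_ne_zero.2 (Nat.succ_ne_zero i))]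
    push_cast; field_simp

end IdealFilter

/-- The truncated Chebyshev series `p_m` of the ideal filter `φ` (the indicator
function of `[α, β]`) converges to `φ` in `L²` of the Chebyshev weight measure:
`∫_{(-1,1)} (p_m(z) - φ(z))² (1 - z²)^(-1/2) dz → 0` as `m → ∞`. -/
theorem truncated_chebyshev_series_tendsto_L2 (α β : ℝ)
    (h1 : -1 ≤ α) (h2 : α ≤ β) (h3 : β ≤ 1)
    (b : ℕ → ℝ)
    (hb0 : b 0 = (Real.arccos α - Real.arccos β) / Real.pi)
    (hbi : ∀ i : ℕ, 1 ≤ i →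
      b i = 2 * (Real.sin (i * Real.arccos α) - Real.sin (i * Real.arccos β)) / (i * Real.pi)) :
    Tendsto
      (fun m : ℕ => ∫ z in Set.Ioo (-1 : ℝ) 1,
        ((∑ i ∈ Finset.range (m + 1), b i * (Chebyshev.T ℝ i).eval z) -
            Set.indicator (Set.Icc α β) (fun _ => (1 : ℝ)) z) ^ 2 *
          (Real.sqrt (1 - z ^ 2))⁻¹)
      atTop (nhds 0) := by
  have hmem : MemLp (fun θ => (idealFilter α β (cos θ) : ℂ)) 2
      (volume.restrict (Set.Ioc (-π) (-π + 2 * π))) :=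
    MemLp.of_bound (measurable_idealFilter.comp measurable_cos).complex_ofReal.aestronglyMeasurable
      1 (ae_of_all _ fun θ => by simpa using norm_idealFilter_le_one (cos θ))
  have h := (tendsto_intervalIntegral_norm_fourierPartialSum_liftIoc_sub_sq hmem).const_mul 2⁻¹
  rw [mul_zero] at h
  refine h.congr fun m => ?_
  rw [integral_sum_T_sub_sq_mul_inv_sqrt, show -π + 2 * π = π by ring]
  congr 1
  refine intervalIntegral.integral_congr fun θ _ => ?_
  rw [fourierPartialSum_idealFilter_cos h1 h2 h3 hb0 hbi, ← Complex.ofReal_sub, Complex.norm_real,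
    Real.norm_eq_abs, sq_abs, idealFilter]
end

section
/- (Clenshaw's algorithm) Let n be a natural number, let a_0, …, a_n be real numbers, and let x ∈ ℝ. Define y_{n+2} = y_{n+1} = 0 and, for k = n, n−1, …, 0, y_k = a_k + 2x·y_{k+1} − y_{k+2}. Then y_0 − x·y_1 = Σ_{k=0}^{n} a_k·T_k(x). -/
open Polynomial Polynomial.Chebyshev

/-- Clenshaw's algorithm: if `y (n+2) = y (n+1) = 0` and
`y k = a k + 2x·y (k+1) − y (k+2)` for `k ≤ n`, then
`y 0 − x·y 1 = Σ_{k=0}^{n} a k · T_k(x)`. -/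
theorem clenshaw_algorithm (n : ℕ) (a : ℕ → ℝ) (x : ℝ) (y : ℕ → ℝ)
    (hy2 : y (n + 2) = 0) (hy1 : y (n + 1) = 0)
    (hrec : ∀ k ≤ n, y k = a k + 2 * x * y (k + 1) - y (k + 2)) :
    y 0 - x * y 1 = ∑ k ∈ Finset.range (n + 1), a k * (Chebyshev.T ℝ k).eval x := by
  have H : ∀ d j, j + 1 + d = n + 1 →
      ∑ k ∈ Finset.Ico (j + 1) (n + 1), a k * (Chebyshev.T ℝ k).eval x =
        y (j + 1) * (Chebyshev.T ℝ (j + 1)).eval x -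
          y (j + 2) * (Chebyshev.T ℝ j).eval x := by
    intro d
    induction d with
    | zero =>
      intro j hj
      have hj' : j = n := by omega
      subst hj'
      simp [hy1, hy2]
    | succ d ih =>
      intro j hj
      have hlt : j + 1 < n + 1 := by omega
      rw [Finset.sum_eq_sum_Ico_succ_bot hlt, ih (j + 1) (by omega)]
      have hrecj : y (j + 1) = a (j + 1) + 2 * x * y (j + 2) - y (j + 3) := by
        have := hrec (j + 1) (by omega)
        simpa using this
      have hT : (Chebyshev.T ℝ ((j : ℤ) + 2)).eval x =
          2 * x * (Chebyshev.T ℝ ((j : ℤ) + 1)).eval x - (Chebyshev.T ℝ (j : ℤ)).eval x := by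
        rw [Chebyshev.T_add_two]
        simp
      push_cast
      rw [show ((j : ℤ) + 1 + 1) = (j : ℤ) + 2 from by ring,
        show j + 1 + 1 = j + 2 from rfl, show j + 1 + 2 = j + 3 from rfl, hT, hrecj]
      ring
  have H0 := H n 0 (by omega)
  have h0 := hrec 0 (Nat.zero_le n)
  rw [Finset.range_eq_Ico, Finset.sum_eq_sum_Ico_succ_bot (by omega : 0 < n + 1), H0]
  norm_num [Chebyshev.T_one, Chebyshev.T_zero] at H0 ⊢
  rw [h0] at *
  linarith [H0]
end
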